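/- Let B ⊆ 𝔽ⁿ be a finite P-independent set and let b ∈ 𝔽ⁿ with b ∉ B̄. Then there exists F ∈ R with F ∈ I(B), F ∉ I(B ∪ {b}) (i.e., F vanishes on all of B but F(b) ≠ 0), and deg(F) ≤ |B|. -/

import Mathlib

/- Common setup: free multivariate skew polynomial rings over a division ring. -/

open Matrix Finsupp

/-- The underlying left `𝔽`-module of the free multivariate skew polynomial ring:
the free left `𝔽`-module with basis the free monoid on `n` symbols. -/
abbrev SkewPoly (𝔽 : Type*) [DivisionRing 𝔽] (n : ℕ) : Type _ := FreeMonoid (Fin n) →₀ 𝔽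

namespace SkewPoly

variable {𝔽 : Type*} [DivisionRing 𝔽] {n : ℕ}

/-- The variable `xᵢ` as a skew polynomial. -/
noncomputable def X (𝔽 : Type*) [DivisionRing 𝔽] {n : ℕ} (i : Fin n) : SkewPoly 𝔽 n :=
  Finsupp.single (FreeMonoid.of i) 1

/-- The constant `a` as a skew polynomial (coefficient on the empty word). -/
noncomputable def C {𝔽 : Type*} [DivisionRing 𝔽] (n : ℕ) (a : 𝔽) :
    SkewPoly 𝔽 n := Finsupp.single 1 a

/-- The degree of a skew polynomial: the maximal length of a word in its support
(`⊥` for the zero polynomial). -/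
noncomputable def deg (F : SkewPoly 𝔽 n) : WithBot ℕ :=
  F.support.sup fun m => ((FreeMonoid.length m : ℕ) : WithBot ℕ)

/-- A matrix morphism `σ : 𝔽 → Mₙ(𝔽)`: a unital ring homomorphism. -/
def IsMatrixMorphism (σ : 𝔽 → Matrix (Fin n) (Fin n) 𝔽) : Prop :=
  σ 1 = 1 ∧ (∀ a b : 𝔽, σ (a + b) = σ a + σ b) ∧ (∀ a b : 𝔽, σ (a * b) = σ a * σ b)

/-- A `σ`-vector derivation `δ : 𝔽 → 𝔽ⁿ`: additive with `δ(ab) = σ(a)δ(b) + δ(a)b`. -/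
def IsVectorDerivation (σ : 𝔽 → Matrix (Fin n) (Fin n) 𝔽) (δ : 𝔽 → Fin n → 𝔽) : Prop :=
  (∀ a b : 𝔽, δ (a + b) = δ a + δ b) ∧
    (∀ a b : 𝔽, δ (a * b) = σ a *ᵥ δ b + fun i => δ a i * b)

/-- A multiplication on the free module `SkewPoly 𝔽 n` making it a ring (with the
existing addition) whose identity is the empty word, which restricts to concatenation
on monomials, is additive on degrees of nonzero elements, and for which left
multiplication by constants is scalar multiplication. -/
structure RawMul (𝔽 : Type*) [DivisionRing 𝔽] (n : ℕ) where
  /-- the multiplication -/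
  mul : SkewPoly 𝔽 n → SkewPoly 𝔽 n → SkewPoly 𝔽 n
  mul_add : ∀ F G H : SkewPoly 𝔽 n, mul F (G + H) = mul F G + mul F H
  add_mul : ∀ F G H : SkewPoly 𝔽 n, mul (F + G) H = mul F H + mul G H
  mul_assoc : ∀ F G H : SkewPoly 𝔽 n, mul (mul F G) H = mul F (mul G H)
  one_mul : ∀ F : SkewPoly 𝔽 n, mul (C n 1) F = F
  mul_one : ∀ F : SkewPoly 𝔽 n, mul F (C n 1) = F
  mono_mul_mono : ∀ m m' : FreeMonoid (Fin n),
    mul (Finsupp.single m 1) (Finsupp.single m' 1) = Finsupp.single (m * m') 1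
  const_mul : ∀ (a : 𝔽) (F : SkewPoly 𝔽 n), mul (C n a) F = a • F
  deg_mul : ∀ F G : SkewPoly 𝔽 n, F ≠ 0 → G ≠ 0 → deg (mul F G) = deg F + deg G

/-- The multiplication `S` satisfies the commutation rule
`xᵢ a = Σⱼ σ_{i,j}(a) xⱼ + δᵢ(a)`. -/
def HasCommRule (S : RawMul 𝔽 n) (σ : 𝔽 → Matrix (Fin n) (Fin n) 𝔽)
    (δ : 𝔽 → Fin n → 𝔽) : Prop :=
  ∀ (i : Fin n) (a : 𝔽),
    S.mul (X 𝔽 i) (C n a) =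
      (∑ j : Fin n, Finsupp.single (FreeMonoid.of j) (σ a i j)) + C n (δ a i)

/-- `F = Σᵢ Gᵢ (xᵢ - aᵢ) + b`, i.e. `b` is a remainder of `F` upon right division
by `x₁ - a₁, …, xₙ - aₙ`; equivalently `F - b` lies in the left ideal generated by
the `xᵢ - aᵢ`. -/
def Decomposes (S : RawMul 𝔽 n) (a : Fin n → 𝔽) (F : SkewPoly 𝔽 n) (b : 𝔽) : Prop :=
  ∃ G : Fin n → SkewPoly 𝔽 n,
    F = (∑ i : Fin n, S.mul (G i) (X 𝔽 i - C n (a i))) + C n b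

/-- The evaluation of `F` at the point `a`: the unique `b ∈ 𝔽` such that `F - b`
lies in the left ideal generated by `x₁ - a₁, …, xₙ - aₙ`. -/
noncomputable def eval (S : RawMul 𝔽 n) (a : Fin n → 𝔽) (F : SkewPoly 𝔽 n) : 𝔽 :=
  letI := Classical.propDecidable (∃ b : 𝔽, Decomposes S a F b)
  if h : ∃ b : 𝔽, Decomposes S a F b then h.choose else 0

/-- The `(σ,δ)`-conjugate `a^c = σ(c) a c⁻¹ + δ(c) c⁻¹` of `a` with respect to `c`. -/
noncomputable def conj (σ : 𝔽 → Matrix (Fin n) (Fin n) 𝔽) (δ : 𝔽 → Fin n → 𝔽)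
    (a : Fin n → 𝔽) (c : 𝔽) : Fin n → 𝔽 :=
  fun i => (σ c *ᵥ a) i * c⁻¹ + δ c i * c⁻¹

/-- `I(Ω)`: the set of skew polynomials vanishing at every point of `Ω`. -/
def zeroIdeal (S : RawMul 𝔽 n) (Ω : Set (Fin n → 𝔽)) : Set (SkewPoly 𝔽 n) :=
  {F | ∀ a ∈ Ω, eval S a F = 0}

/-- The left ideal of `SkewPoly 𝔽 n` generated by `x₁ - a₁, …, xₙ - aₙ`
(the set of sums of left multiples of the generators). -/
def pointIdeal (S : RawMul 𝔽 n) (a : Fin n → 𝔽) : Set (SkewPoly 𝔽 n) :=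
  {F | ∃ G : Fin n → SkewPoly 𝔽 n, F = ∑ i : Fin n, S.mul (G i) (X 𝔽 i - C n (a i))}

/-- The P-closure `Ω̄ = Z(I(Ω))` of a set of points `Ω`. -/
def pClosure (S : RawMul 𝔽 n) (Ω : Set (Fin n → 𝔽)) : Set (Fin n → 𝔽) :=
  {a | ∀ F ∈ zeroIdeal S Ω, eval S a F = 0}

/-- `Ω` is P-closed if it equals its P-closure. -/
def IsPClosed (S : RawMul 𝔽 n) (Ω : Set (Fin n → 𝔽)) : Prop := pClosure S Ω = Ω

/-- `B` is P-independent: no point of `B` lies in the P-closure of the rest. -/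
def PIndep (S : RawMul 𝔽 n) (B : Set (Fin n → 𝔽)) : Prop :=
  ∀ a ∈ B, a ∉ pClosure S (B \ {a})

/-- `B` is a P-basis of `Ω`: a P-independent subset of `Ω` whose P-closure is `Ω`. -/
def IsPBasis (S : RawMul 𝔽 n) (B Ω : Set (Fin n → 𝔽)) : Prop :=
  B ⊆ Ω ∧ PIndep S B ∧ pClosure S B = Ω

/-- `Ω` is finitely generated: it is the P-closure of a finite subset of itself. -/
def FinGen (S : RawMul 𝔽 n) (Ω : Set (Fin n → 𝔽)) : Prop :=
  ∃ G : Set (Fin n → 𝔽), G.Finite ∧ G ⊆ Ω ∧ pClosure S G = Ω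

/-- The rank of a P-closed set: the (common) cardinality of its P-bases. -/
noncomputable def pRank (S : RawMul 𝔽 n) (Ω : Set (Fin n → 𝔽)) : ℕ :=
  sInf {k : ℕ | ∃ B : Finset (Fin n → 𝔽), IsPBasis S ↑B Ω ∧ B.card = k}

/-- The image of the evaluation map `E_Ω : R → 𝔽^Ω`, as a left `𝔽`-subspace of `𝔽^Ω`
(the span of the image; the image is itself a subspace since evaluation is left linear). -/
noncomputable def evalSpan (S : RawMul 𝔽 n) (Ω : Set (Fin n → 𝔽)) :
    Submodule 𝔽 (↥Ω → 𝔽) :=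
  Submodule.span 𝔽 (Set.range fun F : SkewPoly 𝔽 n => fun a : ↥Ω => eval S ↑a F)

/-- `I` is a two-sided ideal with respect to the multiplication `S`. -/
def IsTwoSidedIdealSet (S : RawMul 𝔽 n) (I : Set (SkewPoly 𝔽 n)) : Prop :=
  (0 : SkewPoly 𝔽 n) ∈ I ∧ (∀ F ∈ I, ∀ G ∈ I, F + G ∈ I) ∧ (∀ F ∈ I, -F ∈ I) ∧
    (∀ F ∈ I, ∀ G : SkewPoly 𝔽 n, S.mul G F ∈ I) ∧
    (∀ F ∈ I, ∀ G : SkewPoly 𝔽 n, S.mul F G ∈ I)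


/-- The left row-rank of the skew Vandermonde matrix `V_d(G)`: the dimension of the
left `𝔽`-span of its rows `(N_m(c))_{c ∈ G}`, indexed by the words `m` of length `< d`,
where `N_m(c)` is the evaluation of the monomial `m` at the point `c`. -/
noncomputable def vandermondeRank (S : RawMul 𝔽 n) (G : Finset (Fin n → 𝔽)) (d : ℕ) :
    Cardinal :=
  Module.rank 𝔽 ↥(Submodule.span 𝔽 (Set.range
    fun m : {m : FreeMonoid (Fin n) // FreeMonoid.length m < d} =>
      fun c : ↥G => eval S ↑c (Finsupp.single (m : FreeMonoid (Fin n)) (1 : 𝔽))))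

end SkewPoly

open SkewPoly

/-!
Evaluation at `a` is the remainder modulo the left ideal generated by the `xᵢ - aᵢ`: it is well
defined because no nonzero constant lies in that ideal (compare top-degree coefficients), it is
left `𝔽`-linear, and left multiples of a polynomial vanishing at `a` vanish at `a`.

Induct on `|B|`. By the induction hypothesis each `x ∈ B` is separated from `B ∖ {x}` by a
polynomial of degree `< |B|`, so by Lagrange interpolation every polynomial agrees on `B` with one
of degree `< |B|`. Splitting a word of length `≥ |B|` as `m₁ m₂` with `|m₂| = |B|` and taking such
an `I` for `m₂` gives `m₁ m₂ = m₁ (m₂ - I) + m₁ I`, where `m₂ - I ∈ I(B)` has degree `|B|` and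
`m₁ I` has smaller degree. Hence every polynomial is, modulo the left ideal generated by the
elements of `I(B)` of degree `≤ |B|`, congruent to one of degree `< |B|`. If all those generators
vanished at `b`, so would every element of `I(B)`, i.e. `b ∈ B̄`.
-/

namespace FreeMonoid

theorem exists_eq_mul_length_eq {α : Type*} (m : FreeMonoid α) {k : ℕ} (hk : k ≤ m.length) :
    ∃ m₁ m₂ : FreeMonoid α, m = m₁ * m₂ ∧ m₂.length = k := by
  refine ⟨ofList (m.toList.take (m.length - k)), ofList (m.toList.drop (m.length - k)), ?_, ?_⟩
  · rw [← ofList_append, List.take_append_drop, ofList_toList]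
  · show (m.toList.drop (m.length - k)).length = k
    rw [List.length_drop]
    exact Nat.sub_sub_self hk

end FreeMonoid

namespace Finsupp

theorem mem_of_forall_single_one_mem {α R : Type*} [Semiring R] {M : Submodule R (α →₀ R)}
    {F : α →₀ R} (h : ∀ w ∈ F.support, single w 1 ∈ M) : F ∈ M := by
  have hF : F ∈ supported R R (F.support : Set α) := (mem_supported R F).2 subset_rfl
  rw [supported_eq_span_single] at hF
  exact Submodule.span_le.2 (by rintro _ ⟨w, hw, rfl⟩; exact h w hw) hF

end Finsupp

namespace SkewPoly

variable {𝔽 : Type*} [DivisionRing 𝔽] {n : ℕ}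

namespace RawMul

variable (S : RawMul 𝔽 n)

noncomputable def mulLeft (F : SkewPoly 𝔽 n) : SkewPoly 𝔽 n →+ SkewPoly 𝔽 n :=
  AddMonoidHom.mk' (S.mul F) (S.mul_add F)

noncomputable def mulRight (G : SkewPoly 𝔽 n) : SkewPoly 𝔽 n →+ SkewPoly 𝔽 n :=
  AddMonoidHom.mk' (S.mul · G) fun F F' => S.add_mul F F' G

theorem mul_zero (F : SkewPoly 𝔽 n) : S.mul F 0 = 0 := map_zero (S.mulLeft F)

theorem zero_mul (G : SkewPoly 𝔽 n) : S.mul 0 G = 0 := map_zero (S.mulRight G)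

theorem mul_sub (F G H : SkewPoly 𝔽 n) : S.mul F (G - H) = S.mul F G - S.mul F H :=
  map_sub (S.mulLeft F) G H

theorem sub_mul (F G H : SkewPoly 𝔽 n) : S.mul (F - G) H = S.mul F H - S.mul G H :=
  map_sub (S.mulRight H) F G

theorem mul_sum {ι : Type*} (s : Finset ι) (F : SkewPoly 𝔽 n) (G : ι → SkewPoly 𝔽 n) :
    S.mul F (∑ i ∈ s, G i) = ∑ i ∈ s, S.mul F (G i) :=
  map_sum (S.mulLeft F) G s

theorem smul_mul (c : 𝔽) (F G : SkewPoly 𝔽 n) : S.mul (c • F) G = c • S.mul F G := by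
  rw [← S.const_mul, ← S.const_mul, S.mul_assoc]

theorem single_mul_single_one (m m' : FreeMonoid (Fin n)) (c : 𝔽) :
    S.mul (single m c) (single m' 1) = single (m * m') c := by
  rw [← smul_single_one, S.smul_mul, S.mono_mul_mono, smul_single_one]

theorem mul_X (G : SkewPoly 𝔽 n) (i : Fin n) :
    S.mul G (X 𝔽 i) = mapDomain (· * FreeMonoid.of i) G := by
  induction G using Finsupp.induction_linear with
  | zero => rw [S.zero_mul, mapDomain_zero]
  | add F G hF hG => rw [S.add_mul, hF, hG, mapDomain_add]
  | single m c => rw [X, S.single_mul_single_one, mapDomain_single]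

theorem mul_X_apply_mul_of (G : SkewPoly 𝔽 n) (i j : Fin n) (m : FreeMonoid (Fin n)) :
    S.mul G (X 𝔽 i) (m * FreeMonoid.of j) = if i = j then G m else 0 := by
  rw [S.mul_X]
  split_ifs with hij
  · subst hij
    exact mapDomain_apply (mul_left_injective _) G m
  · refine mapDomain_of_notMem_range _ _ ?_
    rintro ⟨m', hm'⟩
    have := congrArg FreeMonoid.toList hm'
    simp only [FreeMonoid.toList_mul, FreeMonoid.toList_of] at this
    exact hij (List.singleton_inj.1 (List.append_inj' this rfl).2)

end RawMul

theorem deg_le_iff {F : SkewPoly 𝔽 n} {d : ℕ} :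
    deg F ≤ d ↔ ∀ w ∈ F.support, FreeMonoid.length w ≤ d := by
  simp only [deg, Finset.sup_le_iff, Nat.cast_le]

theorem deg_lt_iff {F : SkewPoly 𝔽 n} {d : ℕ} :
    deg F < d ↔ ∀ w ∈ F.support, FreeMonoid.length w < d := by
  rw [deg, Finset.sup_lt_iff (a := (d : WithBot ℕ)) (by simp)]
  simp only [Nat.cast_lt]

theorem deg_lt_iff_mem_supported {F : SkewPoly 𝔽 n} {d : ℕ} :
    deg F < d ↔ F ∈ supported 𝔽 𝔽 {w | FreeMonoid.length w < d} := by
  rw [deg_lt_iff, mem_supported]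
  rfl

theorem apply_eq_zero_of_deg_lt {F : SkewPoly 𝔽 n} {w : FreeMonoid (Fin n)}
    (h : deg F < FreeMonoid.length w) : F w = 0 :=
  notMem_support_iff.1 fun hw => Nat.lt_irrefl _ (deg_lt_iff.1 h w hw)

theorem deg_single_le (m : FreeMonoid (Fin n)) (c : 𝔽) :
    deg (single m c : SkewPoly 𝔽 n) ≤ FreeMonoid.length m :=
  deg_le_iff.2 fun _ hw =>
    (congrArg FreeMonoid.length (Finset.mem_singleton.1 (support_single_subset hw))).le

theorem deg_sub_le (F G : SkewPoly 𝔽 n) : deg (F - G) ≤ max (deg F) (deg G) := by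
  classical
  exact (Finset.sup_mono support_sub).trans_eq Finset.sup_union

theorem deg_mul_le (S : RawMul 𝔽 n) (F G : SkewPoly 𝔽 n) :
    deg (S.mul F G) ≤ deg F + deg G := by
  rcases eq_or_ne F 0 with rfl | hF
  · simp [S.zero_mul, deg]
  rcases eq_or_ne G 0 with rfl | hG
  · simp [S.mul_zero, deg]
  exact (S.deg_mul F G hF hG).le

theorem deg_mul_C_le (S : RawMul 𝔽 n) (F : SkewPoly 𝔽 n) (c : 𝔽) :
    deg (S.mul F (C n c)) ≤ deg F := by
  calc deg (S.mul F (C n c)) ≤ deg F + deg (C n c) := deg_mul_le S F _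
    _ ≤ deg F + (0 : ℕ) := add_le_add_right (deg_single_le 1 c) _
    _ = deg F := by simp

theorem deg_mul_lt (S : RawMul 𝔽 n) {F G : SkewPoly 𝔽 n} {p q : ℕ} (hF : deg F ≤ p)
    (hG : deg G < q) : deg (S.mul F G) < (p + q : ℕ) := by
  calc deg (S.mul F G) ≤ deg F + deg G := deg_mul_le S F G
    _ ≤ p + deg G := add_le_add_left hF _
    _ < p + q := WithBot.add_lt_add_left WithBot.coe_ne_bot hG
    _ = (p + q : ℕ) := by push_cast; rfl

theorem eq_zero_of_sum_mul_X_sub_C_eq_C (S : RawMul 𝔽 n) {H : Fin n → SkewPoly 𝔽 n}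
    {a : Fin n → 𝔽} {c : 𝔽} (h : ∑ i, S.mul (H i) (X 𝔽 i - C n (a i)) = C n c) : c = 0 := by
  classical
  by_cases hH : ∀ i, H i = 0
  · simpa [hH, S.zero_mul, C] using h.symm
  push Not at hH
  obtain ⟨i₀, hi₀⟩ := hH
  -- compare the coefficients of `m xⱼ` for a longest word `m` occurring in some `Hⱼ`
  obtain ⟨⟨j, m⟩, hjm, hmax⟩ := (Finset.univ.sigma fun i => (H i).support).exists_max_image
    (fun p => FreeMonoid.length p.2) <| by
      obtain ⟨m, hm⟩ := support_nonempty_iff.2 hi₀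
      exact ⟨⟨i₀, m⟩, Finset.mem_sigma.2 ⟨Finset.mem_univ _, hm⟩⟩
  have hdeg : ∀ i, deg (H i) ≤ FreeMonoid.length m := fun i =>
    deg_le_iff.2 fun w hw => hmax ⟨i, w⟩ (Finset.mem_sigma.2 ⟨Finset.mem_univ _, hw⟩)
  have hlong : (FreeMonoid.length m : WithBot ℕ) < FreeMonoid.length (m * FreeMonoid.of j) :=
    Nat.cast_lt.2 (by simp)
  have hcoeff := congrArg (· (m * FreeMonoid.of j)) h
  simp only [S.mul_sub, Finset.sum_sub_distrib, Finsupp.sub_apply, Finsupp.finsetSum_apply,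
    S.mul_X_apply_mul_of, Finset.sum_ite_eq', Finset.mem_univ, if_true] at hcoeff
  rw [Finset.sum_eq_zero fun i _ => apply_eq_zero_of_deg_lt
    ((deg_mul_C_le S _ _).trans_lt ((hdeg i).trans_lt hlong)), sub_zero,
    apply_eq_zero_of_deg_lt (F := C n c)
      ((deg_single_le 1 c).trans_lt (Nat.cast_lt.2 (by simp)))] at hcoeff
  exact absurd hcoeff (mem_support_iff.1 (Finset.mem_sigma.1 hjm).2)

theorem C_add (x y : 𝔽) : C n (x + y) = C n x + C n y := Finsupp.single_add 1 x y

theorem C_sub (x y : 𝔽) : C n (x - y) = C n x - C n y := Finsupp.single_sub 1 x y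

theorem smul_C (c x : 𝔽) : c • C n x = C n (c * x) := Finsupp.smul_single c 1 x

theorem C_sum {ι : Type*} (s : Finset ι) (f : ι → 𝔽) : C n (∑ i ∈ s, f i) = ∑ i ∈ s, C n (f i) :=
  Finsupp.single_finsetSum s f 1

section Evaluation

variable {S : RawMul 𝔽 n} {a : Fin n → 𝔽} {F F' : SkewPoly 𝔽 n} {b b' : 𝔽}

theorem decomposes_C (S : RawMul 𝔽 n) (a : Fin n → 𝔽) (c : 𝔽) : Decomposes S a (C n c) c :=
  ⟨0, by simp [S.zero_mul]⟩

theorem decomposes_zero (S : RawMul 𝔽 n) (a : Fin n → 𝔽) : Decomposes S a 0 0 := by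
  simpa [C] using decomposes_C S a 0

theorem Decomposes.add (h : Decomposes S a F b) (h' : Decomposes S a F' b') :
    Decomposes S a (F + F') (b + b') := by
  obtain ⟨G, rfl⟩ := h
  obtain ⟨G', rfl⟩ := h'
  refine ⟨G + G', ?_⟩
  simp only [Pi.add_apply, S.add_mul, Finset.sum_add_distrib, C_add]
  abel

theorem Decomposes.smul (c : 𝔽) (h : Decomposes S a F b) : Decomposes S a (c • F) (c * b) := by
  obtain ⟨G, rfl⟩ := h
  refine ⟨c • G, ?_⟩
  simp only [Pi.smul_apply, S.smul_mul, smul_add, Finset.smul_sum, smul_C]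

theorem Decomposes.mul_left (Q : SkewPoly 𝔽 n) (h : Decomposes S a F b)
    (hQ : Decomposes S a (S.mul Q (C n b)) b') : Decomposes S a (S.mul Q F) b' := by
  obtain ⟨G, rfl⟩ := h
  obtain ⟨G', hG'⟩ := hQ
  refine ⟨fun i => S.mul Q (G i) + G' i, ?_⟩
  simp only [S.mul_add, S.mul_sum, ← S.mul_assoc, hG', S.add_mul, Finset.sum_add_distrib]
  abel

theorem Decomposes.unique (h : Decomposes S a F b) (h' : Decomposes S a F b') : b = b' := by
  obtain ⟨G, hG⟩ := h
  obtain ⟨G', hG'⟩ := h'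
  refine sub_eq_zero.1 (eq_zero_of_sum_mul_X_sub_C_eq_C S (H := G' - G) (a := a) ?_)
  simp only [Pi.sub_apply, S.sub_mul, Finset.sum_sub_distrib, C_sub]
  linear_combination (norm := abel) hG - hG'

theorem Decomposes.eval_eq (h : Decomposes S a F b) : eval S a F = b := by
  have hex : ∃ c, Decomposes S a F c := ⟨b, h⟩
  rw [eval, dif_pos hex]
  exact hex.choose_spec.unique h

variable {σ : 𝔽 → Matrix (Fin n) (Fin n) 𝔽} {δ : 𝔽 → Fin n → 𝔽}

theorem decomposes_X_mul_C (hS : HasCommRule S σ δ) (i : Fin n) (c : 𝔽) :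
    Decomposes S a (S.mul (X 𝔽 i) (C n c)) ((σ c *ᵥ a) i + δ c i) := by
  refine ⟨fun j => C n (σ c i j), ?_⟩
  have hsingle : ∀ j, single (FreeMonoid.of j) (σ c i j) =
      S.mul (C n (σ c i j)) (X 𝔽 j - C n (a j)) + C n (σ c i j * a j) := fun j => by
    rw [S.mul_sub, S.const_mul, S.const_mul, smul_C, X, Finsupp.smul_single_one, sub_add_cancel]
  rw [hS i c]
  simp only [hsingle, Finset.sum_add_distrib, mulVec, dotProduct, C_add, C_sum]
  abel

theorem exists_decomposes (hS : HasCommRule S σ δ) (a : Fin n → 𝔽) (F : SkewPoly 𝔽 n) :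
    ∃ b, Decomposes S a F b := by
  induction F using Finsupp.induction_linear with
  | zero => exact ⟨0, decomposes_zero S a⟩
  | add F G hF hG =>
    obtain ⟨b, hb⟩ := hF
    obtain ⟨b', hb'⟩ := hG
    exact ⟨_, hb.add hb'⟩
  | single m c =>
    suffices ∃ b, Decomposes S a (single m 1) b by
      obtain ⟨b, hb⟩ := this
      exact ⟨_, smul_single_one m c ▸ hb.smul c⟩
    induction m using FreeMonoid.recOn with
    | one => exact ⟨1, decomposes_C S a 1⟩
    | of_mul i m ih =>
      obtain ⟨b, hb⟩ := ih
      exact ⟨_, S.mono_mul_mono (.of i) m ▸ hb.mul_left (X 𝔽 i) (decomposes_X_mul_C hS i b)⟩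

theorem decomposes_eval (hS : HasCommRule S σ δ) (a : Fin n → 𝔽) (F : SkewPoly 𝔽 n) :
    Decomposes S a F (eval S a F) := by
  obtain ⟨b, hb⟩ := exists_decomposes hS a F
  rwa [hb.eval_eq]

noncomputable def leval (hS : HasCommRule S σ δ) (a : Fin n → 𝔽) : SkewPoly 𝔽 n →ₗ[𝔽] 𝔽 where
  toFun := eval S a
  map_add' F G := ((decomposes_eval hS a F).add (decomposes_eval hS a G)).eval_eq
  map_smul' c F := ((decomposes_eval hS a F).smul c).eval_eq

@[simp]
theorem leval_apply (hS : HasCommRule S σ δ) (a : Fin n → 𝔽) (F : SkewPoly 𝔽 n) :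
    leval hS a F = eval S a F :=
  rfl

theorem eval_add (hS : HasCommRule S σ δ) (a : Fin n → 𝔽) (F G : SkewPoly 𝔽 n) :
    eval S a (F + G) = eval S a F + eval S a G :=
  map_add (leval hS a) F G

theorem eval_sub (hS : HasCommRule S σ δ) (a : Fin n → 𝔽) (F G : SkewPoly 𝔽 n) :
    eval S a (F - G) = eval S a F - eval S a G :=
  map_sub (leval hS a) F G

theorem eval_mul_eq_zero (hS : HasCommRule S σ δ) (Q : SkewPoly 𝔽 n) {G : SkewPoly 𝔽 n}
    (hG : eval S a G = 0) : eval S a (S.mul Q G) = 0 := by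
  have h := decomposes_eval hS a G
  rw [hG] at h
  exact (h.mul_left Q (by simpa [C, S.mul_zero] using decomposes_zero S a)).eval_eq

end Evaluation

theorem sup_supported_eq_top (S : RawMul 𝔽 n) {K : Submodule 𝔽 (SkewPoly 𝔽 n)}
    (hK : ∀ Q, ∀ G ∈ K, S.mul Q G ∈ K) {d : ℕ}
    (hred : ∀ m : FreeMonoid (Fin n), m.length = d → ∃ I, deg I < d ∧ single m 1 - I ∈ K) :
    K ⊔ supported 𝔽 𝔽 {w | FreeMonoid.length w < d} = ⊤ := by
  set L := supported 𝔽 𝔽 {w : FreeMonoid (Fin n) | w.length < d}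
  have hword : ∀ k, ∀ m : FreeMonoid (Fin n), m.length = k → single m 1 ∈ K ⊔ L := by
    intro k
    induction k using Nat.strong_induction_on with
    | _ k ih =>
    rintro m rfl
    by_cases hm : m.length < d
    · exact Submodule.mem_sup_right (single_mem_supported 𝔽 1 hm)
    obtain ⟨m₁, m₂, rfl, hm₂⟩ := m.exists_eq_mul_length_eq (not_lt.1 hm)
    obtain ⟨I, hI, hIK⟩ := hred m₂ hm₂
    rw [← S.mono_mul_mono, ← sub_add_cancel (single m₂ 1) I, S.mul_add]
    refine add_mem (Submodule.mem_sup_left (hK _ _ hIK))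
      (mem_of_forall_single_one_mem fun w hw => ih _ ?_ w rfl)
    have := deg_lt_iff.1 (deg_mul_lt S (deg_single_le m₁ 1) hI) w hw
    rwa [FreeMonoid.length_mul, hm₂]
  exact eq_top_iff.2 fun F _ => mem_of_forall_single_one_mem fun w _ => hword _ w rfl

section PClosure

variable {σ : 𝔽 → Matrix (Fin n) (Fin n) 𝔽} {δ : 𝔽 → Fin n → 𝔽} {S : RawMul 𝔽 n}

theorem pClosure_mono (S : RawMul 𝔽 n) {Ω Ω' : Set (Fin n → 𝔽)} (h : Ω ⊆ Ω') :
    pClosure S Ω ⊆ pClosure S Ω' :=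
  fun _ ha F hF => ha F fun x hx => hF x (h hx)

theorem PIndep.mono {B B' : Set (Fin n → 𝔽)} (hB : PIndep S B) (h : B' ⊆ B) : PIndep S B' :=
  fun a ha hc => hB a (h ha) (pClosure_mono S (Set.sdiff_subset_sdiff_left h) hc)

noncomputable def zeroSubmodule (hS : HasCommRule S σ δ) (Ω : Set (Fin n → 𝔽)) :
    Submodule 𝔽 (SkewPoly 𝔽 n) :=
  ⨅ a ∈ Ω, LinearMap.ker (leval hS a)

theorem mem_zeroSubmodule (hS : HasCommRule S σ δ) {Ω : Set (Fin n → 𝔽)} {F : SkewPoly 𝔽 n} :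
    F ∈ zeroSubmodule hS Ω ↔ F ∈ zeroIdeal S Ω := by
  simp [zeroSubmodule, zeroIdeal]

theorem mul_mem_zeroSubmodule (hS : HasCommRule S σ δ) {Ω : Set (Fin n → 𝔽)}
    (Q : SkewPoly 𝔽 n) {G : SkewPoly 𝔽 n} (hG : G ∈ zeroSubmodule hS Ω) :
    S.mul Q G ∈ zeroSubmodule hS Ω :=
  (mem_zeroSubmodule hS).2 fun x hx => eval_mul_eq_zero hS Q ((mem_zeroSubmodule hS).1 hG x hx)

theorem exists_deg_lt_eval_eq (hS : HasCommRule S σ δ) {B : Finset (Fin n → 𝔽)}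
    (hsep : ∀ x ∈ B, ∃ F : SkewPoly 𝔽 n,
      (∀ y ∈ B, y ≠ x → eval S y F = 0) ∧ eval S x F ≠ 0 ∧ deg F < B.card)
    (v : (Fin n → 𝔽) → 𝔽) : ∃ I, deg I < B.card ∧ ∀ x ∈ B, eval S x I = v x := by
  choose! F hF₀ hFx hFdeg using hsep
  refine ⟨∑ x ∈ B, (v x * (eval S x (F x))⁻¹) • F x, ?_, fun y hy => ?_⟩
  · rw [deg_lt_iff_mem_supported]
    exact Submodule.sum_mem _ fun x hx =>
      Submodule.smul_mem _ _ (deg_lt_iff_mem_supported.1 (hFdeg x hx))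
  · rw [← leval_apply hS, map_sum, Finset.sum_eq_single_of_mem y hy fun x hx hxy => by
      rw [map_smul, leval_apply, hF₀ x hx y hy (Ne.symm hxy), smul_zero]]
    rw [map_smul, leval_apply, smul_eq_mul, mul_assoc, inv_mul_cancel₀ (hFx y hy), mul_one]

theorem mem_pClosure_of_forall_deg_le (hS : HasCommRule S σ δ) {B : Finset (Fin n → 𝔽)}
    (hinterp : ∀ F : SkewPoly 𝔽 n, ∃ I, deg I < B.card ∧ ∀ x ∈ B, eval S x I = eval S x F)
    {b : Fin n → 𝔽}
    (hb : ∀ G, G ∈ zeroIdeal S ↑B → deg G ≤ B.card → eval S b G = 0) :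
    b ∈ pClosure S ↑B := by
  set K := zeroSubmodule hS (insert b ↑B)
  have htop : K ⊔ supported 𝔽 𝔽 {w | FreeMonoid.length w < B.card} = ⊤ := by
    refine sup_supported_eq_top S (fun Q _ => mul_mem_zeroSubmodule hS Q) fun m hm => ?_
    obtain ⟨I, hI, hIB⟩ := hinterp (single m 1)
    have hvan : single m 1 - I ∈ zeroIdeal S ↑B := fun x hx => by
      rw [eval_sub hS, hIB x hx, sub_self]
    refine ⟨I, hI, (mem_zeroSubmodule hS).2 ?_⟩
    rintro x (rfl | hx)
    · exact hb _ hvan ((deg_sub_le _ _).trans (max_le (hm ▸ deg_single_le m 1) hI.le))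
    · exact hvan x hx
  intro F hF
  obtain ⟨H, hHK, R, hRL, rfl⟩ := Submodule.mem_sup.1 (htop ▸ Submodule.mem_top (x := F))
  have hH : H ∈ zeroIdeal S (insert b ↑B) := (mem_zeroSubmodule hS).1 hHK
  have hR : R ∈ zeroIdeal S ↑B := fun x hx => by
    simpa [eval_add hS, hH x (.inr hx)] using hF x hx
  rw [eval_add hS, hH b (.inl rfl), hb R hR (deg_lt_iff_mem_supported.2 hRL).le, add_zero]

theorem exists_mem_zeroIdeal_eval_ne_zero_deg_le (hS : HasCommRule S σ δ)
    (B : Finset (Fin n → 𝔽)) (hB : PIndep S ↑B) {b : Fin n → 𝔽} (hb : b ∉ pClosure S ↑B) :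
    ∃ F : SkewPoly 𝔽 n, F ∈ zeroIdeal S ↑B ∧ eval S b F ≠ 0 ∧ deg F ≤ B.card := by
  classical
  induction B using Finset.strongInduction generalizing b with
  | H B ih =>
  have hsep : ∀ x ∈ B, ∃ F : SkewPoly 𝔽 n,
      (∀ y ∈ B, y ≠ x → eval S y F = 0) ∧ eval S x F ≠ 0 ∧ deg F < B.card := by
    intro x hx
    obtain ⟨F, hF₀, hFx, hdeg⟩ := ih (B.erase x) (Finset.erase_ssubset hx)
      (hB.mono (by simp)) (b := x) (by simpa using hB x hx)
    exact ⟨F, fun y hy hyx => hF₀ y (Finset.mem_erase.2 ⟨hyx, hy⟩), hFx,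
      hdeg.trans_lt (Nat.cast_lt.2 (Finset.card_erase_lt_of_mem hx))⟩
  by_contra! hlow
  refine hb (mem_pClosure_of_forall_deg_le hS (fun F => exists_deg_lt_eval_eq hS hsep _)
    fun G hG hdeg => ?_)
  by_contra hGb
  exact (hlow G hG hGb).not_ge hdeg

end PClosure

end SkewPoly

theorem stmt10_general {𝔽 : Type*} [DivisionRing 𝔽] {n : ℕ}
    (σ : 𝔽 → Matrix (Fin n) (Fin n) 𝔽) (δ : 𝔽 → Fin n → 𝔽)
    (S : RawMul 𝔽 n) (hS : HasCommRule S σ δ)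
    (B : Set (Fin n → 𝔽)) (hBfin : B.Finite) (hBind : PIndep S B)
    (b : Fin n → 𝔽) (hb : b ∉ pClosure S B) :
    ∃ F : SkewPoly 𝔽 n, (∀ x ∈ B, eval S x F = 0) ∧ eval S b F ≠ 0 ∧
      deg F ≤ (B.ncard : WithBot ℕ) := by
  obtain ⟨B, rfl⟩ := hBfin.exists_finset_coe
  rw [Set.ncard_coe_finset]
  exact exists_mem_zeroIdeal_eval_ne_zero_deg_le hS B hBind hb

/-- If `B` is finite and P-independent and `b ∉ B̄`, then there is a
skew polynomial `F` of degree `≤ |B|` vanishing on `B` with `F(b) ≠ 0`. -/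
theorem stmt10 {𝔽 : Type*} [DivisionRing 𝔽] {n : ℕ} (hn : 0 < n)
    (σ : 𝔽 → Matrix (Fin n) (Fin n) 𝔽) (δ : 𝔽 → Fin n → 𝔽)
    (hσ : IsMatrixMorphism σ) (hδ : IsVectorDerivation σ δ)
    (S : RawMul 𝔽 n) (hS : HasCommRule S σ δ)
    (B : Set (Fin n → 𝔽)) (hBfin : B.Finite) (hBind : PIndep S B)
    (b : Fin n → 𝔽) (hb : b ∉ pClosure S B) :
    ∃ F : SkewPoly 𝔽 n, (∀ x ∈ B, eval S x F = 0) ∧ eval S b F ≠ 0 ∧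
      deg F ≤ (B.ncard : WithBot ℕ) :=
  stmt10_general σ δ S hS B hBfin hBind b hb
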